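/- Let k be a field of characteristic ≠ 2, H₄ the Sweedler Hopf algebra, and A = k[x] ⊆ H₄ the subalgebra generated by x (so A has basis {1, x} with x² = 0). The map ρ̄: A → A ⊗ H₄ determined by ρ̄(1) = (1/2)(1 ⊗ 1 + 1 ⊗ c + 1 ⊗ cx) and ρ̄(x) = (x ⊗ 1)ρ̄(1) makes A a partial H₄-comodule algebra. The smallest H₄-subcomodule subalgebra B of A ⊗ H₄ (with coaction I ⊗ Δ) containing ρ̄(A) has basis {1 ⊗ 1, 1 ⊗ c + 1 ⊗ cx, x ⊗ 1, x ⊗ c + x ⊗ cx}; writing 1_B = 1 ⊗ 1, g = 1 ⊗ c + 1 ⊗ cx, y = x ⊗ 1, one has g² = 1_B, y² = 0, gy = yg, the element e = (1/2)(1_B + g) is a central idempotent of B with ρ̄(A) = eB, and B is isomorphic as an algebra to kZ₂ ⊗ k[Y]/(Y²). -/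

import Mathlib

open TensorProduct

/-- The axioms of a (right) partial coaction `ρ : A → A ⊗ H` of a Hopf algebra `H` on a
unital algebra `A`. -/
structure IsPartialCoaction (k : Type*) [Field k] (H A : Type*) [Ring H] [HopfAlgebra k H]
    [Ring A] [Algebra k A] (ρ : A →ₗ[k] A ⊗[k] H) : Prop where
  map_mul : ∀ a b : A, ρ (a * b) = ρ a * ρ b
  counit_id : ∀ a : A,
    (TensorProduct.rid k A) ((LinearMap.lTensor A Coalgebra.counit) (ρ a)) = a
  coassoc : ∀ a : A,
    (LinearMap.rTensor H ρ) (ρ a) =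
      (ρ 1 ⊗ₜ[k] (1 : H)) *
        ((TensorProduct.assoc k A H H).symm ((LinearMap.lTensor A Coalgebra.comul) (ρ a)))

/-!
Write `u = c + cx` and `p = ½(1 + u)`. Since `u² = 1`, `p` is an idempotent with `ε(p) = 1`, and
`Δ(u) = u ⊗ c + 1 ⊗ cx` gives `(p ⊗ 1)Δ(p) = p ⊗ p`; these are exactly the partial-coaction
axioms for `ρ̄(b) = b ⊗ p`, which is what the hypotheses on `ρ̄(1)` and `ρ̄(a)` say.

The algebra `B` is `A ⊗ span{1, u}`. The formula for `Δ(u)` makes it a subcomodule of `A ⊗ H`.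
Conversely, `(I ⊗ Δ)(b ⊗ p) = ½((b ⊗ 1) ⊗ 1 + (b ⊗ u) ⊗ c + (b ⊗ 1) ⊗ cx)`, and slicing the last
factor with the coordinate functionals of `1` and `c` puts `b ⊗ 1` and `b ⊗ u` into every
subcomodule that contains `ρ̄(A)`. The element `e = 1 ⊗ p` commutes with `1 ⊗ u` and satisfies
`e(b ⊗ 1) = e(b ⊗ u) = b ⊗ p`, so `eB = ρ̄(A)`. Finally, the algebra map
`kZ₂ ⊗ k[ε] → A ⊗ H` that sends the generator of `Z₂` to `1 ⊗ u` and `ε` to `a ⊗ 1` has image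
`B`. Both algebras have dimension 4, so the map is injective.
-/

open Submodule Set

theorem Set.image2_pair_pair {α β γ : Type*} (f : α → β → γ) (a₁ a₂ : α) (b₁ b₂ : β) :
    image2 f {a₁, a₂} {b₁, b₂} = {f a₁ b₁, f a₁ b₂, f a₂ b₁, f a₂ b₂} := by
  rw [image2_insert_left, image2_singleton_left, image_pair, image_pair, insert_union,
    singleton_union]

section LinearIndependent

theorem LinearIndependent.tmul_pair {R M N : Type*} [CommRing R] [IsDomain R] [AddCommGroup M]
    [Module R M] [AddCommGroup N] [Module R N] {m₁ m₂ : M} {n₁ n₂ : N}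
    (hm : LinearIndependent R ![m₁, m₂]) (hn : LinearIndependent R ![n₁, n₂]) :
    LinearIndependent R ![m₁ ⊗ₜ[R] n₁, m₁ ⊗ₜ n₂, m₂ ⊗ₜ n₁, m₂ ⊗ₜ n₂] := by
  convert (hm.tmul_of_isDomain hn).comp _ finProdFinEquiv.symm.injective
  ext i
  fin_cases i <;> rfl

variable {K V : Type*} [Field K] [AddCommGroup V] [Module K V]

theorem LinearIndependent.pair_add_of_triple {x y z : V} (h : LinearIndependent K ![x, y, z]) :
    LinearIndependent K ![x, y + z] := by
  rw [LinearIndependent.pair_iff]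
  intro s t hst
  have := Fintype.linearIndependent_iff.mp h ![s, t, t]
    (by simpa [Fin.sum_univ_three, smul_add, add_assoc] using hst)
  exact ⟨this 0, this 1⟩

theorem LinearIndependent.exists_coord {ι : Type*} {v : ι → V} (hv : LinearIndependent K v)
    (i : ι) : ∃ φ : V →ₗ[K] K, ∀ j, φ (v j) = Finsupp.single j 1 i := by
  obtain ⟨φ, hφ⟩ := LinearMap.exists_extend (Finsupp.lapply i ∘ₗ hv.repr)
  refine ⟨φ, fun j => ?_⟩
  have hj : v j ∈ span K (range v) := subset_span (mem_range_self j)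
  have := LinearMap.congr_fun hφ ⟨v j, hj⟩
  simp only [LinearMap.comp_apply, Submodule.subtype_apply] at this
  rw [this, hv.repr_eq_single j _ rfl, Finsupp.lapply_apply]

end LinearIndependent

section TensorProduct

variable {R M N : Type*} [CommSemiring R] [AddCommMonoid M] [Module R M] [AddCommMonoid N]
  [Module R N]

theorem tmul_mem_span_image2 {S : Set M} {T : Set N} (hS : span R S = ⊤) (m : M) {n : N}
    (hn : n ∈ span R T) : m ⊗ₜ[R] n ∈ span R (image2 (· ⊗ₜ[R] ·) S T) := by
  have hB := map₂_span_span R (TensorProduct.mk R M N) S T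
  simp only [TensorProduct.mk_apply] at hB
  rw [← hB, hS]
  exact apply_mem_map₂ _ mem_top hn

theorem LinearMap.apply_eq_tmul_of_span_eq_top {S : Set M} (hS : span R S = ⊤)
    {ρ : M →ₗ[R] M ⊗[R] N} {n : N} (h : ∀ s ∈ S, ρ s = s ⊗ₜ n) (m : M) : ρ m = m ⊗ₜ n :=
  LinearMap.congr_fun (LinearMap.ext_on hS (g := (TensorProduct.mk R M N).flip n) h) m

variable {W : Submodule R M}

theorem tmul_mem_range_rTensor_subtype {w : M} (hw : w ∈ W) (n : N) :
    w ⊗ₜ[R] n ∈ LinearMap.range (LinearMap.rTensor N W.subtype) :=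
  ⟨⟨w, hw⟩ ⊗ₜ n, rfl⟩

theorem rid_lTensor_mem_of_mem_range_rTensor (φ : N →ₗ[R] R) {z : M ⊗[R] N}
    (hz : z ∈ LinearMap.range (LinearMap.rTensor N W.subtype)) :
    TensorProduct.rid R M (LinearMap.lTensor M φ z) ∈ W := by
  obtain ⟨t, rfl⟩ := hz
  induction t using TensorProduct.induction_on with
  | zero => simp
  | tmul w n => simpa using W.smul_mem (φ n) w.2
  | add t₁ t₂ h₁ h₂ => simpa only [map_add] using add_mem h₁ h₂

end TensorProduct

section HalfOneAdd

variable {k R : Type*} [Field k] [Ring R] [Algebra k R]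

theorem inv_two_smul_one_add_mul_of_mul_self {u : R} (hu : u * u = 1) :
    (2 : k)⁻¹ • (1 + u) * u = (2 : k)⁻¹ • (1 + u) := by
  rw [smul_mul_assoc, add_mul, one_mul, hu, add_comm]

theorem isIdempotentElem_inv_two_smul_one_add {u : R} (h2 : (2 : k) ≠ 0) (hu : u * u = 1) :
    IsIdempotentElem ((2 : k)⁻¹ • (1 + u)) := by
  rw [IsIdempotentElem, mul_smul_comm, mul_add, mul_one, inv_two_smul_one_add_mul_of_mul_self hu,
    ← two_smul k, smul_smul, inv_mul_cancel₀ h2, one_smul]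

theorem inv_two_smul_one_add_mem_span_pair (u : R) : (2 : k)⁻¹ • (1 + u) ∈ span k {1, u} :=
  smul_mem _ _ (add_mem (subset_span (by simp)) (subset_span (by simp)))

theorem commute_inv_two_smul_one_add_of_mem_pair {u t : R} (ht : t ∈ ({1, u} : Set R)) :
    Commute ((2 : k)⁻¹ • (1 + u)) t := by
  rcases ht with rfl | rfl
  exacts [Commute.one_right _, ((Commute.one_left _).add_left (Commute.refl _)).smul_left _]

end HalfOneAdd

section Bialgebra

variable {k R : Type*} [Field k] [Ring R] [Bialgebra k R] {u v w : R}

theorem counit_inv_two_smul_one_add (h2 : (2 : k) ≠ 0) (hεu : Coalgebra.counit (R := k) u = 1) :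
    Coalgebra.counit (R := k) ((2 : k)⁻¹ • (1 + u)) = 1 := by
  rw [map_smul, map_add, Bialgebra.counit_one, hεu, one_add_one_eq_two, smul_eq_mul,
    inv_mul_cancel₀ h2]

theorem comul_inv_two_smul_one_add (hΔu : Coalgebra.comul (R := k) u = u ⊗ₜ[k] v + 1 ⊗ₜ[k] w) :
    Coalgebra.comul (R := k) ((2 : k)⁻¹ • (1 + u)) =
      (2 : k)⁻¹ • ((1 : R) ⊗ₜ[k] (1 : R) + u ⊗ₜ[k] v + 1 ⊗ₜ[k] w) := by
  rw [map_smul, map_add, Bialgebra.comul_one, Algebra.TensorProduct.one_def, hΔu, add_assoc]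

theorem tmul_one_mul_comul_inv_two_smul_one_add (hu : u * u = 1)
    (hΔu : Coalgebra.comul (R := k) u = u ⊗ₜ[k] v + 1 ⊗ₜ[k] w) (hvw : v + w = u) :
    ((2 : k)⁻¹ • (1 + u)) ⊗ₜ[k] (1 : R) * Coalgebra.comul (R := k) ((2 : k)⁻¹ • (1 + u)) =
      ((2 : k)⁻¹ • (1 + u)) ⊗ₜ[k] ((2 : k)⁻¹ • (1 + u)) := by
  rw [comul_inv_two_smul_one_add hΔu, mul_smul_comm, mul_add, mul_add,
    Algebra.TensorProduct.tmul_mul_tmul, Algebra.TensorProduct.tmul_mul_tmul,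
    Algebra.TensorProduct.tmul_mul_tmul, mul_one, mul_one, one_mul, one_mul,
    inv_two_smul_one_add_mul_of_mul_self hu, ← tmul_add, ← tmul_add, add_assoc, hvw, tmul_smul]

end Bialgebra

section Sweedler

variable {k H : Type*} [Field k] [Ring H] {c x : H}

theorem sweedler_mul_self (hc2 : c * c = 1) (hx2 : x * x = 0) (hxc : x * c = -(c * x)) :
    (c + c * x) * (c + c * x) = 1 := by
  have hcxc : c * x * c = -x := by rw [mul_assoc, hxc, mul_neg, ← mul_assoc, hc2, one_mul]
  rw [mul_add, add_mul, add_mul, hc2, ← mul_assoc, hc2, one_mul, hcxc, ← mul_assoc, hcxc,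
    neg_mul, hx2, neg_zero, add_zero, neg_add_cancel_right]

variable [Bialgebra k H]

theorem sweedler_comul (hc2 : c * c = 1) (hΔc : Coalgebra.comul (R := k) c = c ⊗ₜ[k] c)
    (hΔx : Coalgebra.comul (R := k) x = x ⊗ₜ[k] 1 + c ⊗ₜ[k] x) :
    Coalgebra.comul (R := k) (c + c * x) = (c + c * x) ⊗ₜ[k] c + (1 : H) ⊗ₜ[k] (c * x) := by
  rw [map_add, Bialgebra.comul_mul, hΔc, hΔx, mul_add, Algebra.TensorProduct.tmul_mul_tmul,
    Algebra.TensorProduct.tmul_mul_tmul, mul_one, hc2, add_tmul, add_assoc]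

theorem sweedler_counit (hεc : Coalgebra.counit (R := k) c = 1)
    (hεx : Coalgebra.counit (R := k) x = 0) : Coalgebra.counit (R := k) (c + c * x) = 1 := by
  rw [map_add, Bialgebra.counit_mul, hεc, hεx, mul_zero, add_zero]

end Sweedler

section PartialCoaction

theorem one_tmul_tmul_one_mul_assoc_symm_tmul {R A H : Type*} [CommSemiring R] [Semiring A]
    [Algebra R A] [Semiring H] [Algebra R H] (p : H) (b : A) (t : H ⊗[R] H) :
    ((1 : A) ⊗ₜ[R] p ⊗ₜ[R] (1 : H)) * (TensorProduct.assoc R A H H).symm (b ⊗ₜ t) =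
      (TensorProduct.assoc R A H H).symm (b ⊗ₜ ((p ⊗ₜ[R] (1 : H)) * t)) := by
  induction t using TensorProduct.induction_on with
  | zero => simp
  | tmul h₁ h₂ => simp
  | add t₁ t₂ h₁ h₂ => simp only [mul_add, tmul_add, map_add, h₁, h₂]

theorem isPartialCoaction_of_eq_tmul {k H A : Type*} [Field k] [Ring H] [HopfAlgebra k H] [Ring A]
    [Algebra k A] {p : H} (hp : IsIdempotentElem p) (hεp : Coalgebra.counit (R := k) p = 1)
    (hΔp : (p ⊗ₜ[k] (1 : H)) * Coalgebra.comul (R := k) p = p ⊗ₜ p)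
    {ρ : A →ₗ[k] A ⊗[k] H} (hρ : ∀ b, ρ b = b ⊗ₜ p) : IsPartialCoaction k H A ρ where
  map_mul a b := by rw [hρ, hρ, hρ, Algebra.TensorProduct.tmul_mul_tmul, hp.eq]
  counit_id a := by rw [hρ, LinearMap.lTensor_tmul, hεp, TensorProduct.rid_tmul, one_smul]
  coassoc a := by
    simp only [hρ, LinearMap.rTensor_tmul, LinearMap.lTensor_tmul,
      one_tmul_tmul_one_mul_assoc_symm_tmul, hΔp, TensorProduct.assoc_symm_tmul]

end PartialCoaction

section Globalization

theorem one_tmul_mul_comm_of_mem_span_image2 {R A H : Type*} [CommSemiring R] [Semiring A]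
    [Algebra R A] [Semiring H] [Algebra R H] {S : Set A} {T : Set H} {e : H}
    (he : ∀ t ∈ T, Commute e t) {z : A ⊗[R] H} (hz : z ∈ span R (image2 (· ⊗ₜ[R] ·) S T)) :
    ((1 : A) ⊗ₜ[R] e) * z = z * ((1 : A) ⊗ₜ[R] e) := by
  have hz' : z ∈ Subalgebra.toSubmodule (Subalgebra.centralizer R {(1 : A) ⊗ₜ[R] e}) := by
    refine span_le.mpr ?_ hz
    rintro _ ⟨s, -, t, ht, rfl⟩
    simp only [SetLike.mem_coe, Subalgebra.mem_toSubmodule, Subalgebra.mem_centralizer_iff,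
      mem_singleton_iff, forall_eq, Algebra.TensorProduct.tmul_mul_tmul, one_mul, mul_one,
      (he t ht).eq]
  simpa only [Subalgebra.mem_toSubmodule, Subalgebra.mem_centralizer_iff, mem_singleton_iff,
    forall_eq] using hz'

variable {k A H : Type*} [Field k] [Ring A] [Algebra k A] [Ring H]

theorem range_eq_map_mulLeft_span_image2 [Algebra k H] {S : Set A} (hS : span k S = ⊤) {u : H}
    (hu : u * u = 1) {ρ : A →ₗ[k] A ⊗[k] H} (hρ : ∀ b, ρ b = b ⊗ₜ ((2 : k)⁻¹ • (1 + u))) :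
    LinearMap.range ρ = map (LinearMap.mulLeft k ((1 : A) ⊗ₜ[k] ((2 : k)⁻¹ • (1 + u))))
      (span k (image2 (· ⊗ₜ[k] ·) S {1, u})) := by
  apply le_antisymm
  · rintro _ ⟨b, rfl⟩
    exact ⟨b ⊗ₜ 1, tmul_mem_span_image2 hS b (subset_span (by simp)), by simp [hρ]⟩
  · rw [map_le_iff_le_comap, span_le]
    rintro _ ⟨s, -, t, ht, rfl⟩
    rcases ht with rfl | rfl
    · exact ⟨s, by simp [hρ]⟩
    · exact ⟨s, by rw [hρ, LinearMap.mulLeft_apply, Algebra.TensorProduct.tmul_mul_tmul, one_mul,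
        inv_two_smul_one_add_mul_of_mul_self hu]⟩

variable (k A H) [Bialgebra k H]

abbrev cofreeCoaction : A ⊗[k] H →ₗ[k] (A ⊗[k] H) ⊗[k] H :=
  (TensorProduct.assoc k A H H).symm.toLinearMap ∘ₗ LinearMap.lTensor A Coalgebra.comul

variable {k A H}

theorem cofreeCoaction_tmul (b : A) (h : H) :
    cofreeCoaction k A H (b ⊗ₜ h) = (TensorProduct.assoc k A H H).symm (b ⊗ₜ Coalgebra.comul h) :=
  rfl

theorem cofreeCoaction_tmul_one (b : A) :
    cofreeCoaction k A H (b ⊗ₜ 1) = b ⊗ₜ (1 : H) ⊗ₜ (1 : H) := by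
  rw [cofreeCoaction_tmul, Bialgebra.comul_one, Algebra.TensorProduct.one_def,
    TensorProduct.assoc_symm_tmul]

theorem cofreeCoaction_mem_range_rTensor_of_mem_span {S : Set A} {u v w : H}
    (hΔu : Coalgebra.comul (R := k) u = u ⊗ₜ[k] v + 1 ⊗ₜ[k] w) {z : A ⊗[k] H}
    (hz : z ∈ span k (image2 (· ⊗ₜ[k] ·) S {1, u})) :
    cofreeCoaction k A H z ∈
      LinearMap.range (LinearMap.rTensor H (span k (image2 (· ⊗ₜ[k] ·) S {1, u})).subtype) := by
  have hB : ∀ s ∈ S, ∀ t ∈ ({1, u} : Set H), s ⊗ₜ[k] t ∈ span k (image2 (· ⊗ₜ[k] ·) S {1, u}) :=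
    fun s hs t ht => subset_span (mem_image2_of_mem hs ht)
  refine (span_le (p := comap (cofreeCoaction k A H) (LinearMap.range _))).mpr ?_ hz
  rintro _ ⟨s, hs, t, ht, rfl⟩
  rcases ht with rfl | rfl
  · rw [SetLike.mem_coe, mem_comap, cofreeCoaction_tmul_one]
    exact tmul_mem_range_rTensor_subtype (hB s hs 1 (by simp)) 1
  · rw [SetLike.mem_coe, mem_comap, cofreeCoaction_tmul, hΔu, tmul_add, map_add,
      TensorProduct.assoc_symm_tmul, TensorProduct.assoc_symm_tmul]
    exact add_mem (tmul_mem_range_rTensor_subtype (hB s hs t (by simp)) v)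
      (tmul_mem_range_rTensor_subtype (hB s hs 1 (by simp)) w)

theorem span_image2_le_of_cofreeCoaction_mem {S : Set A} {u v w : H} (h2 : (2 : k) ≠ 0)
    (hΔu : Coalgebra.comul (R := k) u = u ⊗ₜ[k] v + 1 ⊗ₜ[k] w)
    (hind : LinearIndependent k ![1, v, w]) {W : Submodule k (A ⊗[k] H)}
    (hW : ∀ z ∈ W, cofreeCoaction k A H z ∈ LinearMap.range (LinearMap.rTensor H W.subtype))
    (hSW : ∀ s ∈ S, s ⊗ₜ[k] ((2 : k)⁻¹ • (1 + u)) ∈ W) :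
    span k (image2 (· ⊗ₜ[k] ·) S {1, u}) ≤ W := by
  have slice : ∀ s ∈ S, ∀ φ : H →ₗ[k] k,
      (2 : k)⁻¹ • (φ 1 • (s ⊗ₜ[k] 1) + φ v • (s ⊗ₜ[k] u) + φ w • (s ⊗ₜ[k] 1)) ∈ W := by
    intro s hs φ
    convert rid_lTensor_mem_of_mem_range_rTensor φ (hW _ (hSW s hs)) using 1
    rw [cofreeCoaction_tmul, comul_inv_two_smul_one_add hΔu]
    simp only [tmul_smul, tmul_add, map_smul, map_add, TensorProduct.assoc_symm_tmul,
      LinearMap.lTensor_tmul, TensorProduct.rid_tmul]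
  obtain ⟨φ₀, hφ₀⟩ := hind.exists_coord 0
  obtain ⟨φ₁, hφ₁⟩ := hind.exists_coord 1
  have h₀ : φ₀ 1 = 1 ∧ φ₀ v = 0 ∧ φ₀ w = 0 := by simpa [Fin.forall_fin_succ] using hφ₀
  have h₁ : φ₁ 1 = 0 ∧ φ₁ v = 1 ∧ φ₁ w = 0 := by simpa [Fin.forall_fin_succ] using hφ₁
  rw [span_le]
  rintro _ ⟨s, hs, t, ht, rfl⟩
  rcases ht with rfl | rfl
  · simpa [h₀, smul_mem_iff W (inv_ne_zero h2)] using slice s hs φ₀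
  · simpa [h₁, smul_mem_iff W (inv_ne_zero h2)] using slice s hs φ₁

end Globalization

theorem AlgHom.mul_mem_range_toLinearMap {R A B : Type*} [CommSemiring R] [Semiring A]
    [Semiring B] [Algebra R A] [Algebra R B] (f : A →ₐ[R] B) {y z : B}
    (hy : y ∈ LinearMap.range f.toLinearMap) (hz : z ∈ LinearMap.range f.toLinearMap) :
    y * z ∈ LinearMap.range f.toLinearMap := by
  obtain ⟨p, rfl⟩ := hy
  obtain ⟨q, rfl⟩ := hz
  exact ⟨p * q, by simp only [AlgHom.toLinearMap_apply, map_mul]⟩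

section InvolutionHom

variable {M : Type*} [Monoid M] {u : M}

def involutionHom (hu : u * u = 1) : Multiplicative (ZMod 2) →* M where
  toFun z := u ^ (Multiplicative.toAdd z).val
  map_one' := pow_zero u
  map_mul' z w := by
    rw [toAdd_mul, ZMod.val_add, ← pow_eq_pow_mod _ (by rwa [sq]), pow_add]

theorem involutionHom_apply (hu : u * u = 1) (z : Multiplicative (ZMod 2)) :
    involutionHom hu z = u ^ (Multiplicative.toAdd z).val :=
  rfl

theorem involutionHom_ofAdd_one (hu : u * u = 1) : involutionHom hu (.ofAdd 1) = u :=
  pow_one u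

theorem involutionHom_mem (hu : u * u = 1) (z : Multiplicative (ZMod 2)) :
    involutionHom hu z ∈ ({1, u} : Set M) := by
  obtain h | h : (Multiplicative.toAdd z).val = 0 ∨ (Multiplicative.toAdd z).val = 1 := by
    have := ZMod.val_lt (Multiplicative.toAdd z); omega
  · exact .inl (by rw [involutionHom_apply, h, pow_zero])
  · exact .inr (by rw [involutionHom_apply, h, pow_one]; rfl)

end InvolutionHom

section GroupAlgebraTensorDualNumber

variable {k : Type*} [Field k] {A H : Type*} [Ring A] [Algebra k A] [Ring H] [Algebra k H]
  {a : A} {u : H}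

noncomputable def groupAlgebraTensorDualNumberHom (ha : a * a = 0) (hu : u * u = 1) :
    MonoidAlgebra k (Multiplicative (ZMod 2)) ⊗[k] DualNumber k →ₐ[k] A ⊗[k] H :=
  (Algebra.TensorProduct.map
      (DualNumber.lift ⟨(Algebra.ofId k A, a), ha, fun r => (Algebra.commutes r a).symm⟩)
      (MonoidAlgebra.lift k H _ (involutionHom hu))).comp
    (Algebra.TensorProduct.comm k _ _).toAlgHom

theorem range_dualNumberLift (ha : a * a = 0) (hA : span k {1, a} = ⊤) :
    LinearMap.range (DualNumber.lift ⟨(Algebra.ofId k A, a), ha,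
      fun r => (Algebra.commutes r a).symm⟩).toLinearMap = span k {1, a} := by
  rw [hA, eq_top_iff, ← hA, span_le]
  rintro _ (rfl | rfl)
  · exact ⟨1, by rw [AlgHom.toLinearMap_apply, map_one]⟩
  · exact ⟨DualNumber.eps, DualNumber.lift_apply_eps _⟩

theorem range_monoidAlgebraLift_involutionHom (hu : u * u = 1) :
    LinearMap.range (MonoidAlgebra.lift k H _ (involutionHom hu)).toLinearMap = span k {1, u} := by
  apply le_antisymm
  · rintro _ ⟨f, rfl⟩
    rw [AlgHom.toLinearMap_apply, MonoidAlgebra.lift_apply]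
    exact sum_mem fun z _ => smul_mem _ _ (subset_span (involutionHom_mem hu z))
  · rw [span_le]
    rintro _ (rfl | rfl)
    · exact ⟨1, by rw [AlgHom.toLinearMap_apply, map_one]⟩
    · exact ⟨MonoidAlgebra.of k _ (.ofAdd 1), by
        rw [AlgHom.toLinearMap_apply, MonoidAlgebra.lift_of, involutionHom_ofAdd_one]⟩

theorem range_groupAlgebraTensorDualNumberHom (ha : a * a = 0) (hu : u * u = 1)
    (hA : span k {1, a} = ⊤) :
    LinearMap.range (groupAlgebraTensorDualNumberHom (k := k) ha hu).toLinearMap =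
      span k (image2 (· ⊗ₜ[k] ·) {1, a} {1, u}) := by
  rw [groupAlgebraTensorDualNumberHom, AlgHom.comp_toLinearMap,
    LinearMap.range_comp_of_range_eq_top, Algebra.TensorProduct.toLinearMap_map,
    TensorProduct.AlgebraTensorModule.map_eq,
    TensorProduct.range_map, range_dualNumberLift ha hA, range_monoidAlgebraLift_involutionHom hu,
    map₂_span_span]
  · rfl
  · exact LinearMap.range_eq_top.mpr (Algebra.TensorProduct.comm k _ _).surjective

theorem finrank_groupAlgebraTensorDualNumber :
    Module.finrank k (MonoidAlgebra k (Multiplicative (ZMod 2)) ⊗[k] DualNumber k) = 4 := by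
  rw [Module.finrank_tensorProduct, (MonoidAlgebra.coeffLinearEquiv k).finrank_eq,
    Module.finrank_finsupp_self]
  show 2 * Module.finrank k (k × k) = 4
  rw [Module.finrank_prod, Module.finrank_self]

theorem injective_groupAlgebraTensorDualNumberHom (ha : a * a = 0) (hu : u * u = 1)
    (hA : span k {1, a} = ⊤)
    (hli : LinearIndependent k ![(1 : A) ⊗ₜ[k] (1 : H), 1 ⊗ₜ u, a ⊗ₜ 1, a ⊗ₜ u]) :
    Function.Injective (groupAlgebraTensorDualNumberHom (k := k) ha hu) := by
  have hrange : Module.finrank k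
      (LinearMap.range (groupAlgebraTensorDualNumberHom (k := k) ha hu).toLinearMap) = 4 := by
    have h4 := finrank_span_eq_card hli
    rw [Matrix.range_cons, Matrix.range_cons, Matrix.range_cons, Matrix.range_cons_empty,
      Set.singleton_union, Set.singleton_union, Set.singleton_union] at h4
    rw [range_groupAlgebraTensorDualNumberHom ha hu hA, Set.image2_pair_pair, h4, Fintype.card_fin]
  have := Module.finite_of_finrank_eq_succ (R := k) finrank_groupAlgebraTensorDualNumber
  have hker := LinearMap.finrank_range_add_finrank_ker
    (groupAlgebraTensorDualNumberHom (k := k) ha hu).toLinearMap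
  rw [hrange, finrank_groupAlgebraTensorDualNumber, add_eq_left, Submodule.finrank_eq_zero,
    LinearMap.ker_eq_bot] at hker
  exact hker

end GroupAlgebraTensorDualNumber

theorem sweedler_partial_coaction_on_kx_general
    (k : Type*) [Field k] (hchar : (2 : k) ≠ 0)
    (H : Type*) [Ring H] [HopfAlgebra k H] (c x : H)
    -- `H` is the Sweedler Hopf algebra `H₄`:
    (hbasis : LinearIndependent k ![(1 : H), c, x, c * x])
    (hc2 : c * c = 1) (hx2 : x * x = 0) (hxc : x * c = -(c * x))
    (hΔc : Coalgebra.comul (R := k) c = c ⊗ₜ[k] c)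
    (hΔx : Coalgebra.comul (R := k) x = x ⊗ₜ[k] 1 + c ⊗ₜ[k] x)
    (hεc : Coalgebra.counit (R := k) c = 1)
    (hεx : Coalgebra.counit (R := k) x = 0)
    -- `A = k[x]`: a unital algebra with basis `{1, a}` and `a² = 0`
    (A : Type*) [Ring A] [Algebra k A] (a : A)
    (hAbasis : LinearIndependent k ![(1 : A), a])
    (hAspan : Submodule.span k {(1 : A), a} = ⊤)
    (ha2 : a * a = 0)
    -- the partial coaction `ρ̄ : A → A ⊗ H₄`
    (ρ : A →ₗ[k] A ⊗[k] H)
    (hρ1 : ρ 1 = (2 : k)⁻¹ •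
      ((1 : A) ⊗ₜ[k] (1 : H) + (1 : A) ⊗ₜ[k] c + (1 : A) ⊗ₜ[k] (c * x)))
    (hρa : ρ a = (2 : k)⁻¹ •
      (a ⊗ₜ[k] (1 : H) + a ⊗ₜ[k] c + a ⊗ₜ[k] (c * x))) :
    -- `ρ̄` is a partial `H₄`-coaction on `A`
    IsPartialCoaction k H A ρ ∧
    -- `B` has basis `{1⊗1, 1⊗c + 1⊗cx, x⊗1, x⊗c + x⊗cx}`
    LinearIndependent k
      ![(1 : A) ⊗ₜ[k] (1 : H), (1 : A) ⊗ₜ[k] c + (1 : A) ⊗ₜ[k] (c * x),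
        a ⊗ₜ[k] (1 : H), a ⊗ₜ[k] c + a ⊗ₜ[k] (c * x)] ∧
    -- `B = span` of these four vectors is closed under multiplication ...
    (∀ u ∈ Submodule.span k
        {(1 : A) ⊗ₜ[k] (1 : H), (1 : A) ⊗ₜ[k] c + (1 : A) ⊗ₜ[k] (c * x),
          a ⊗ₜ[k] (1 : H), a ⊗ₜ[k] c + a ⊗ₜ[k] (c * x)},
     ∀ v ∈ Submodule.span k
        {(1 : A) ⊗ₜ[k] (1 : H), (1 : A) ⊗ₜ[k] c + (1 : A) ⊗ₜ[k] (c * x),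
          a ⊗ₜ[k] (1 : H), a ⊗ₜ[k] c + a ⊗ₜ[k] (c * x)},
      u * v ∈ Submodule.span k
        {(1 : A) ⊗ₜ[k] (1 : H), (1 : A) ⊗ₜ[k] c + (1 : A) ⊗ₜ[k] (c * x),
          a ⊗ₜ[k] (1 : H), a ⊗ₜ[k] c + a ⊗ₜ[k] (c * x)}) ∧
    -- ... is an `H₄`-subcomodule of `A ⊗ H₄` for `δ = I ⊗ Δ` ...
    (∀ w ∈ Submodule.span k
        {(1 : A) ⊗ₜ[k] (1 : H), (1 : A) ⊗ₜ[k] c + (1 : A) ⊗ₜ[k] (c * x),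
          a ⊗ₜ[k] (1 : H), a ⊗ₜ[k] c + a ⊗ₜ[k] (c * x)},
      ((TensorProduct.assoc k A H H).symm.toLinearMap ∘ₗ
          LinearMap.lTensor A Coalgebra.comul) w ∈
        LinearMap.range (LinearMap.rTensor H (Submodule.subtype (Submodule.span k
          {(1 : A) ⊗ₜ[k] (1 : H), (1 : A) ⊗ₜ[k] c + (1 : A) ⊗ₜ[k] (c * x),
            a ⊗ₜ[k] (1 : H), a ⊗ₜ[k] c + a ⊗ₜ[k] (c * x)})))) ∧
    -- ... contains `ρ̄(A)` ...
    (∀ b : A, ρ b ∈ Submodule.span k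
        {(1 : A) ⊗ₜ[k] (1 : H), (1 : A) ⊗ₜ[k] c + (1 : A) ⊗ₜ[k] (c * x),
          a ⊗ₜ[k] (1 : H), a ⊗ₜ[k] c + a ⊗ₜ[k] (c * x)}) ∧
    -- ... and is the smallest such subspace:
    (∀ W : Submodule k (A ⊗[k] H),
      (∀ u ∈ W, ∀ v ∈ W, u * v ∈ W) →
      (∀ w ∈ W, ((TensorProduct.assoc k A H H).symm.toLinearMap ∘ₗ
          LinearMap.lTensor A Coalgebra.comul) w ∈
        LinearMap.range (LinearMap.rTensor H (Submodule.subtype W))) →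
      (∀ b : A, ρ b ∈ W) →
      Submodule.span k
        {(1 : A) ⊗ₜ[k] (1 : H), (1 : A) ⊗ₜ[k] c + (1 : A) ⊗ₜ[k] (c * x),
          a ⊗ₜ[k] (1 : H), a ⊗ₜ[k] c + a ⊗ₜ[k] (c * x)} ≤ W) ∧
    -- the relations `g² = 1_B`, `y² = 0`, `gy = yg`
    (((1 : A) ⊗ₜ[k] c + (1 : A) ⊗ₜ[k] (c * x)) * ((1 : A) ⊗ₜ[k] c + (1 : A) ⊗ₜ[k] (c * x)) =
      (1 : A ⊗[k] H)) ∧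
    ((a ⊗ₜ[k] (1 : H)) * (a ⊗ₜ[k] (1 : H)) = 0) ∧
    (((1 : A) ⊗ₜ[k] c + (1 : A) ⊗ₜ[k] (c * x)) * (a ⊗ₜ[k] (1 : H)) =
      (a ⊗ₜ[k] (1 : H)) * ((1 : A) ⊗ₜ[k] c + (1 : A) ⊗ₜ[k] (c * x))) ∧
    -- `e = (1/2)(1_B + g)` is a central idempotent of `B` ...
    (((2 : k)⁻¹ • ((1 : A ⊗[k] H) + ((1 : A) ⊗ₜ[k] c + (1 : A) ⊗ₜ[k] (c * x)))) *
        ((2 : k)⁻¹ • ((1 : A ⊗[k] H) + ((1 : A) ⊗ₜ[k] c + (1 : A) ⊗ₜ[k] (c * x)))) =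
      (2 : k)⁻¹ • ((1 : A ⊗[k] H) + ((1 : A) ⊗ₜ[k] c + (1 : A) ⊗ₜ[k] (c * x)))) ∧
    (∀ b ∈ Submodule.span k
        {(1 : A) ⊗ₜ[k] (1 : H), (1 : A) ⊗ₜ[k] c + (1 : A) ⊗ₜ[k] (c * x),
          a ⊗ₜ[k] (1 : H), a ⊗ₜ[k] c + a ⊗ₜ[k] (c * x)},
      ((2 : k)⁻¹ • ((1 : A ⊗[k] H) + ((1 : A) ⊗ₜ[k] c + (1 : A) ⊗ₜ[k] (c * x)))) * b =
        b * ((2 : k)⁻¹ • ((1 : A ⊗[k] H) + ((1 : A) ⊗ₜ[k] c + (1 : A) ⊗ₜ[k] (c * x))))) ∧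
    -- ... with `ρ̄(A) = e B`
    (LinearMap.range ρ = Submodule.map
      (LinearMap.mulLeft k
        ((2 : k)⁻¹ • ((1 : A ⊗[k] H) + ((1 : A) ⊗ₜ[k] c + (1 : A) ⊗ₜ[k] (c * x)))))
      (Submodule.span k
        {(1 : A) ⊗ₜ[k] (1 : H), (1 : A) ⊗ₜ[k] c + (1 : A) ⊗ₜ[k] (c * x),
          a ⊗ₜ[k] (1 : H), a ⊗ₜ[k] c + a ⊗ₜ[k] (c * x)})) ∧
    -- `B ≅ kZ₂ ⊗ k[Y]/(Y²)` as a `k`-algebra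
    (∃ ψ : (MonoidAlgebra k (Multiplicative (ZMod 2)) ⊗[k] DualNumber k) →ₐ[k] (A ⊗[k] H),
      Function.Injective ψ ∧
      LinearMap.range ψ.toLinearMap = Submodule.span k
        {(1 : A) ⊗ₜ[k] (1 : H), (1 : A) ⊗ₜ[k] c + (1 : A) ⊗ₜ[k] (c * x),
          a ⊗ₜ[k] (1 : H), a ⊗ₜ[k] c + a ⊗ₜ[k] (c * x)}) := by
  set u := c + c * x with hu_def
  have hu : u * u = 1 := sweedler_mul_self hc2 hx2 hxc
  have hΔu := sweedler_comul (k := k) hc2 hΔc hΔx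
  have hind : LinearIndependent k ![1, c, c * x] := by
    convert hbasis.comp ![0, 1, 3] (by decide) using 1
    ext i; fin_cases i <;> rfl
  have hρ : ∀ b, ρ b = b ⊗ₜ[k] ((2 : k)⁻¹ • (1 + u)) :=
    LinearMap.apply_eq_tmul_of_span_eq_top hAspan (by
      rintro _ (rfl | rfl) <;> simp only [hρ1, hρa, tmul_smul, tmul_add, add_assoc, hu_def])
  have hE : (2 : k)⁻¹ • ((1 : A ⊗[k] H) + ((1 : A) ⊗ₜ[k] c + (1 : A) ⊗ₜ[k] (c * x))) =
      (1 : A) ⊗ₜ[k] ((2 : k)⁻¹ • (1 + u)) := by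
    rw [Algebra.TensorProduct.one_def, ← tmul_add, ← tmul_add, tmul_smul]
  have hB : Submodule.span k {(1 : A) ⊗ₜ[k] (1 : H), (1 : A) ⊗ₜ[k] c + (1 : A) ⊗ₜ[k] (c * x),
      a ⊗ₜ[k] (1 : H), a ⊗ₜ[k] c + a ⊗ₜ[k] (c * x)} =
      Submodule.span k (Set.image2 (· ⊗ₜ[k] ·) {1, a} {1, u}) := by
    rw [Set.image2_pair_pair, tmul_add, tmul_add]
  have hψ := range_groupAlgebraTensorDualNumberHom ha2 hu hAspan
  have hli := hAbasis.tmul_pair hind.pair_add_of_triple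
  rw [hE, hB, ← tmul_add (1 : A) c, ← tmul_add a c, ← hu_def]
  refine ⟨isPartialCoaction_of_eq_tmul (isIdempotentElem_inv_two_smul_one_add hchar hu)
      (counit_inv_two_smul_one_add hchar (sweedler_counit hεc hεx))
      (tmul_one_mul_comul_inv_two_smul_one_add hu hΔu rfl) hρ,
    hli,
    hψ ▸ fun _ hy _ hz => (groupAlgebraTensorDualNumberHom ha2 hu).mul_mem_range_toLinearMap hy hz,
    fun w hw => cofreeCoaction_mem_range_rTensor_of_mem_span hΔu hw,
    fun b => hρ b ▸ tmul_mem_span_image2 hAspan b (inv_two_smul_one_add_mem_span_pair u),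
    fun W _ hW hρW => span_image2_le_of_cofreeCoaction_mem hchar hΔu hind hW
      fun s _ => hρ s ▸ hρW s,
    by rw [Algebra.TensorProduct.tmul_mul_tmul, one_mul, hu, Algebra.TensorProduct.one_def],
    by rw [Algebra.TensorProduct.tmul_mul_tmul, ha2, zero_tmul],
    by simp only [Algebra.TensorProduct.tmul_mul_tmul, one_mul, mul_one],
    ((isIdempotentElem_inv_two_smul_one_add hchar hu).map Algebra.TensorProduct.includeRight).eq,
    fun b hb => one_tmul_mul_comm_of_mem_span_image2
      (fun _ ht => commute_inv_two_smul_one_add_of_mem_pair ht) hb,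
    range_eq_map_mulLeft_span_image2 hAspan hu hρ,
    ⟨groupAlgebraTensorDualNumberHom ha2 hu,
      injective_groupAlgebraTensorDualNumberHom ha2 hu hAspan hli, hψ⟩⟩

/-- **Example: a partial coaction of the Sweedler algebra on `k[x]` and its
globalization.** -/
theorem sweedler_partial_coaction_on_kx
    (k : Type*) [Field k] (hchar : (2 : k) ≠ 0)
    (H : Type*) [Ring H] [HopfAlgebra k H] (c x : H)
    -- `H` is the Sweedler Hopf algebra `H₄`:
    (hbasis : LinearIndependent k ![(1 : H), c, x, c * x])
    (hspan : Submodule.span k {(1 : H), c, x, c * x} = ⊤)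
    (hc2 : c * c = 1) (hx2 : x * x = 0) (hxc : x * c = -(c * x))
    (hΔc : Coalgebra.comul (R := k) c = c ⊗ₜ[k] c)
    (hΔx : Coalgebra.comul (R := k) x = x ⊗ₜ[k] 1 + c ⊗ₜ[k] x)
    (hεc : Coalgebra.counit (R := k) c = 1)
    (hεx : Coalgebra.counit (R := k) x = 0)
    (hSc : HopfAlgebra.antipode (R := k) c = c)
    (hSx : HopfAlgebra.antipode (R := k) x = -x)
    -- `A = k[x]`: a unital algebra with basis `{1, a}` and `a² = 0`
    (A : Type*) [Ring A] [Algebra k A] (a : A)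
    (hAbasis : LinearIndependent k ![(1 : A), a])
    (hAspan : Submodule.span k {(1 : A), a} = ⊤)
    (ha2 : a * a = 0)
    -- the partial coaction `ρ̄ : A → A ⊗ H₄`
    (ρ : A →ₗ[k] A ⊗[k] H)
    (hρ1 : ρ 1 = (2 : k)⁻¹ •
      ((1 : A) ⊗ₜ[k] (1 : H) + (1 : A) ⊗ₜ[k] c + (1 : A) ⊗ₜ[k] (c * x)))
    (hρa : ρ a = (2 : k)⁻¹ •
      (a ⊗ₜ[k] (1 : H) + a ⊗ₜ[k] c + a ⊗ₜ[k] (c * x))) :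
    -- `ρ̄` is a partial `H₄`-coaction on `A`
    IsPartialCoaction k H A ρ ∧
    -- `B` has basis `{1⊗1, 1⊗c + 1⊗cx, x⊗1, x⊗c + x⊗cx}`
    LinearIndependent k
      ![(1 : A) ⊗ₜ[k] (1 : H), (1 : A) ⊗ₜ[k] c + (1 : A) ⊗ₜ[k] (c * x),
        a ⊗ₜ[k] (1 : H), a ⊗ₜ[k] c + a ⊗ₜ[k] (c * x)] ∧
    -- `B = span` of these four vectors is closed under multiplication ...
    (∀ u ∈ Submodule.span k
        {(1 : A) ⊗ₜ[k] (1 : H), (1 : A) ⊗ₜ[k] c + (1 : A) ⊗ₜ[k] (c * x),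
          a ⊗ₜ[k] (1 : H), a ⊗ₜ[k] c + a ⊗ₜ[k] (c * x)},
     ∀ v ∈ Submodule.span k
        {(1 : A) ⊗ₜ[k] (1 : H), (1 : A) ⊗ₜ[k] c + (1 : A) ⊗ₜ[k] (c * x),
          a ⊗ₜ[k] (1 : H), a ⊗ₜ[k] c + a ⊗ₜ[k] (c * x)},
      u * v ∈ Submodule.span k
        {(1 : A) ⊗ₜ[k] (1 : H), (1 : A) ⊗ₜ[k] c + (1 : A) ⊗ₜ[k] (c * x),
          a ⊗ₜ[k] (1 : H), a ⊗ₜ[k] c + a ⊗ₜ[k] (c * x)}) ∧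
    -- ... is an `H₄`-subcomodule of `A ⊗ H₄` for `δ = I ⊗ Δ` ...
    (∀ w ∈ Submodule.span k
        {(1 : A) ⊗ₜ[k] (1 : H), (1 : A) ⊗ₜ[k] c + (1 : A) ⊗ₜ[k] (c * x),
          a ⊗ₜ[k] (1 : H), a ⊗ₜ[k] c + a ⊗ₜ[k] (c * x)},
      ((TensorProduct.assoc k A H H).symm.toLinearMap ∘ₗ
          LinearMap.lTensor A Coalgebra.comul) w ∈
        LinearMap.range (LinearMap.rTensor H (Submodule.subtype (Submodule.span k
          {(1 : A) ⊗ₜ[k] (1 : H), (1 : A) ⊗ₜ[k] c + (1 : A) ⊗ₜ[k] (c * x),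
            a ⊗ₜ[k] (1 : H), a ⊗ₜ[k] c + a ⊗ₜ[k] (c * x)})))) ∧
    -- ... contains `ρ̄(A)` ...
    (∀ b : A, ρ b ∈ Submodule.span k
        {(1 : A) ⊗ₜ[k] (1 : H), (1 : A) ⊗ₜ[k] c + (1 : A) ⊗ₜ[k] (c * x),
          a ⊗ₜ[k] (1 : H), a ⊗ₜ[k] c + a ⊗ₜ[k] (c * x)}) ∧
    -- ... and is the smallest such subspace:
    (∀ W : Submodule k (A ⊗[k] H),
      (∀ u ∈ W, ∀ v ∈ W, u * v ∈ W) →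
      (∀ w ∈ W, ((TensorProduct.assoc k A H H).symm.toLinearMap ∘ₗ
          LinearMap.lTensor A Coalgebra.comul) w ∈
        LinearMap.range (LinearMap.rTensor H (Submodule.subtype W))) →
      (∀ b : A, ρ b ∈ W) →
      Submodule.span k
        {(1 : A) ⊗ₜ[k] (1 : H), (1 : A) ⊗ₜ[k] c + (1 : A) ⊗ₜ[k] (c * x),
          a ⊗ₜ[k] (1 : H), a ⊗ₜ[k] c + a ⊗ₜ[k] (c * x)} ≤ W) ∧
    -- the relations `g² = 1_B`, `y² = 0`, `gy = yg`
    (((1 : A) ⊗ₜ[k] c + (1 : A) ⊗ₜ[k] (c * x)) * ((1 : A) ⊗ₜ[k] c + (1 : A) ⊗ₜ[k] (c * x)) =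
      (1 : A ⊗[k] H)) ∧
    ((a ⊗ₜ[k] (1 : H)) * (a ⊗ₜ[k] (1 : H)) = 0) ∧
    (((1 : A) ⊗ₜ[k] c + (1 : A) ⊗ₜ[k] (c * x)) * (a ⊗ₜ[k] (1 : H)) =
      (a ⊗ₜ[k] (1 : H)) * ((1 : A) ⊗ₜ[k] c + (1 : A) ⊗ₜ[k] (c * x))) ∧
    -- `e = (1/2)(1_B + g)` is a central idempotent of `B` ...
    (((2 : k)⁻¹ • ((1 : A ⊗[k] H) + ((1 : A) ⊗ₜ[k] c + (1 : A) ⊗ₜ[k] (c * x)))) *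
        ((2 : k)⁻¹ • ((1 : A ⊗[k] H) + ((1 : A) ⊗ₜ[k] c + (1 : A) ⊗ₜ[k] (c * x)))) =
      (2 : k)⁻¹ • ((1 : A ⊗[k] H) + ((1 : A) ⊗ₜ[k] c + (1 : A) ⊗ₜ[k] (c * x)))) ∧
    (∀ b ∈ Submodule.span k
        {(1 : A) ⊗ₜ[k] (1 : H), (1 : A) ⊗ₜ[k] c + (1 : A) ⊗ₜ[k] (c * x),
          a ⊗ₜ[k] (1 : H), a ⊗ₜ[k] c + a ⊗ₜ[k] (c * x)},
      ((2 : k)⁻¹ • ((1 : A ⊗[k] H) + ((1 : A) ⊗ₜ[k] c + (1 : A) ⊗ₜ[k] (c * x)))) * b =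
        b * ((2 : k)⁻¹ • ((1 : A ⊗[k] H) + ((1 : A) ⊗ₜ[k] c + (1 : A) ⊗ₜ[k] (c * x))))) ∧
    -- ... with `ρ̄(A) = e B`
    (LinearMap.range ρ = Submodule.map
      (LinearMap.mulLeft k
        ((2 : k)⁻¹ • ((1 : A ⊗[k] H) + ((1 : A) ⊗ₜ[k] c + (1 : A) ⊗ₜ[k] (c * x)))))
      (Submodule.span k
        {(1 : A) ⊗ₜ[k] (1 : H), (1 : A) ⊗ₜ[k] c + (1 : A) ⊗ₜ[k] (c * x),
          a ⊗ₜ[k] (1 : H), a ⊗ₜ[k] c + a ⊗ₜ[k] (c * x)})) ∧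
    -- `B ≅ kZ₂ ⊗ k[Y]/(Y²)` as a `k`-algebra
    (∃ ψ : (MonoidAlgebra k (Multiplicative (ZMod 2)) ⊗[k] DualNumber k) →ₐ[k] (A ⊗[k] H),
      Function.Injective ψ ∧
      LinearMap.range ψ.toLinearMap = Submodule.span k
        {(1 : A) ⊗ₜ[k] (1 : H), (1 : A) ⊗ₜ[k] c + (1 : A) ⊗ₜ[k] (c * x),
          a ⊗ₜ[k] (1 : H), a ⊗ₜ[k] c + a ⊗ₜ[k] (c * x)}) :=
  sweedler_partial_coaction_on_kx_general k hchar H c x hbasis hc2 hx2 hxc hΔc hΔx hεc hεx A a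
    hAbasis hAspan ha2 ρ hρ1 hρa
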